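/- Let B_n ⊆ {0,1}^n, let S_n = {k ∈ [n] : {k} is a singleton part of SP(B_n)}, let A ⊆ B_n, let p : A → B_n be injective, and let Q_p : [n] → ⊓A (where ⊓A := ⊓_{a∈A} SP(a)) be the assignment with |Q_p^{-1}(P)| = |P| for all P ∈ ⊓A satisfying: every π ∈ Sym_n realising some σ ∈ Sym(B_n) with σ^{-1}(a) = p(a) for all a ∈ A has π(k) ∈ Q_p(k) for all k. Then every such π additionally satisfies π^{-1}(P ∩ S_n) = Q_p^{-1}(P) ∩ S_n for every part P ∈ ⊓A. -/

import Mathlib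

/-- Binary strings of length `n`: the set `{0,1}ⁿ`. -/
abbrev Str (n : ℕ) := Fin n → Bool

/-- The action of `Sym_n` on strings, permuting positions: `(π·v)_i = v_{π⁻¹(i)}`. -/
def act {n : ℕ} (π : Equiv.Perm (Fin n)) (v : Str n) : Str n := fun i => v (π.symm i)

/-- The action of `Sym_n` on sets of strings. -/
def actSet {n : ℕ} (π : Equiv.Perm (Fin n)) (C : Set (Str n)) : Set (Str n) := act π '' C

/-- The (setwise) stabiliser of a set of strings. -/
def setStab {n : ℕ} (C : Set (Str n)) : Set (Equiv.Perm (Fin n)) := {π | actSet π C = C}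

/-- The orbit of a set of strings under `Sym_n`. -/
def setOrbit {n : ℕ} (C : Set (Str n)) : Set (Set (Str n)) := {D | ∃ π, D = actSet π C}

/-- An ordered partition of `{0,1}ⁿ`: a tuple of pairwise disjoint nonempty subsets
whose union is everything. -/
def IsOrderedPartition {n m : ℕ} (C : Fin m → Set (Str n)) : Prop :=
  (∀ i, (C i).Nonempty) ∧ (Pairwise fun i j => Disjoint (C i) (C j)) ∧ (⋃ i, C i) = Set.univ

/-- The stabiliser of an ordered partition (componentwise). -/
def tupStab {n m : ℕ} (C : Fin m → Set (Str n)) : Set (Equiv.Perm (Fin n)) :=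
  {π | ∀ i, actSet π (C i) = C i}

/-- The orbit of an ordered partition under the componentwise action of `Sym_n`. -/
def tupOrbit {n m : ℕ} (C : Fin m → Set (Str n)) : Set (Fin m → Set (Str n)) :=
  {D | ∃ π, D = fun i => actSet π (C i)}

/-- Pointwise stabiliser of a partition (setoid) of `[n]`: permutations fixing
each part setwise. -/
def ptStab {n : ℕ} (s : Setoid (Fin n)) : Set (Equiv.Perm (Fin n)) :=
  {π | ∀ P ∈ s.classes, (π : Fin n → Fin n) '' P = P}

/-- Setwise stabiliser of a partition of `[n]`: permutations mapping parts to parts. -/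
def swStab {n : ℕ} (s : Setoid (Fin n)) : Set (Equiv.Perm (Fin n)) :=
  {π | ∀ P ∈ s.classes, (π : Fin n → Fin n) '' P ∈ s.classes}

/-- A partition `s` of `[n]` is a supporting partition of `G` if its pointwise
stabiliser is contained in `G`. -/
def IsSupporting {n : ℕ} (G : Set (Equiv.Perm (Fin n))) (s : Setoid (Fin n)) : Prop :=
  ∀ π ∈ ptStab s, π ∈ G

/-- `s` is as coarse as `t`: every part of `t` is contained in some part of `s`. -/
def AsCoarseAs {X : Type*} (s t : Setoid X) : Prop :=
  ∀ P ∈ t.classes, ∃ Q ∈ s.classes, P ⊆ Q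

/-- `s` is the coarsest supporting partition of `G`. -/
def IsCoarsestSupp {n : ℕ} (G : Set (Equiv.Perm (Fin n))) (s : Setoid (Fin n)) : Prop :=
  IsSupporting G s ∧ ∀ t, IsSupporting G t → AsCoarseAs s t

/-- The intersection `⊓_{a ∈ A} f(a)` of a family of partitions: parts are the
nonempty intersections of parts. -/
def interSetoid {X ι : Type*} (A : Set ι) (f : ι → Setoid X) : Setoid X where
  r x y := ∀ a ∈ A, (f a).r x y
  iseqv := ⟨fun x a _ => (f a).refl x,
            fun h a ha => (f a).symm (h a ha),
            fun h h' a ha => (f a).trans (h a ha) (h' a ha)⟩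

/-- `SP(a)` for a string `a`: the partition of positions according to the bit of `a`. -/
def strSetoid {n : ℕ} (a : Str n) : Setoid (Fin n) where
  r k j := a k = a j
  iseqv := ⟨fun _ => rfl, Eq.symm, Eq.trans⟩

/-- `π ∈ Sym_n` realises a permutation `σ` of the parts of a partition `s` if
`π(P) = σ(P)` for every part `P`. -/
def Realises {n : ℕ} (π : Equiv.Perm (Fin n)) {s : Setoid (Fin n)}
    (σ : Equiv.Perm s.classes) : Prop :=
  ∀ P : s.classes, (π : Fin n → Fin n) '' (P : Set (Fin n)) = ((σ P : Set (Fin n)))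

/-! A permutation `π` inducing a permutation of `B` stabilises `B`. Conjugation by an element of a
group `G` maps supporting partitions of `G` to supporting partitions, so the coarsest one is
conjugation invariant; hence `π` permutes the singleton parts of `SP(B)`, i.e. `π k ∈ S ↔ k ∈ S`.
Since `π k` lies in the part `Q k` of `⊓A`, also `π k ∈ P ↔ Q k = P`, and the claim is the
conjunction of the two equivalences. -/

theorem Setoid.singleton_mem_classes_iff {α : Type*} (s : Setoid α) (k : α) :
    {k} ∈ s.classes ↔ ∀ j, s j k → j = k := by
  constructor
  · rintro ⟨y, hy⟩ j hjk
    have hky : s k y := (Set.ext_iff.1 hy k).1 rfl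
    exact (hy ▸ s.trans hjk hky : j ∈ ({k} : Set α))
  · intro h
    refine ⟨k, Set.ext fun j => ⟨?_, h j⟩⟩
    rintro rfl
    exact s.refl j

theorem AsCoarseAs.le {X : Type*} {s t : Setoid X} (h : AsCoarseAs s t) : t ≤ s := by
  intro x y hxy
  obtain ⟨P, hP, hsub⟩ := h _ (t.mem_classes y)
  exact s.rel_iff_exists_classes.2 ⟨P, hP, hsub hxy, hsub (t.refl y)⟩

theorem mem_ptStab_iff {n : ℕ} {s : Setoid (Fin n)} {π : Equiv.Perm (Fin n)} :
    π ∈ ptStab s ↔ ∀ k, s (π k) k := by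
  constructor
  · intro h k
    have hk : π k ∈ (π : Fin n → Fin n) '' {j | s j k} := ⟨k, s.refl k, rfl⟩
    rwa [h _ (s.mem_classes k)] at hk
  · rintro h _ ⟨y, rfl⟩
    refine Set.Subset.antisymm ?_ fun j hj => ⟨π.symm j, ?_, π.apply_symm_apply j⟩
    · rintro _ ⟨j, hj, rfl⟩
      exact s.trans (h j) hj
    · have := h (π.symm j)
      rw [π.apply_symm_apply] at this
      exact s.trans (s.symm this) hj

section Supporting

variable {n : ℕ} {G : Subgroup (Equiv.Perm (Fin n))} {s : Setoid (Fin n)}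
  {π : Equiv.Perm (Fin n)}

theorem IsSupporting.comap (hs : IsSupporting G s) (hπ : π ∈ G) :
    IsSupporting G (s.comap π) := by
  intro ρ hρ
  have hconj : π * ρ * π⁻¹ ∈ ptStab s := by
    refine mem_ptStab_iff.2 fun k => ?_
    simpa [Setoid.comap_rel] using mem_ptStab_iff.1 hρ (π⁻¹ k)
  simpa [mul_assoc] using G.mul_mem (G.mul_mem (G.inv_mem hπ) (hs _ hconj)) hπ

theorem IsCoarsestSupp.comap_eq (hs : IsCoarsestSupp G s) (hπ : π ∈ G) :
    s.comap π = s := by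
  refine le_antisymm (hs.2 _ (hs.1.comap hπ)).le fun x y hxy => ?_
  have hle := (hs.2 _ (hs.1.comap (G.inv_mem hπ))).le
  simpa [Setoid.comap_rel] using @hle (π x) (π y) (by simpa [Setoid.comap_rel] using hxy)

theorem IsCoarsestSupp.singleton_mem_classes_iff (hs : IsCoarsestSupp G s) (hπ : π ∈ G)
    (k : Fin n) : {π k} ∈ s.classes ↔ {k} ∈ s.classes := by
  simp only [Setoid.singleton_mem_classes_iff]
  conv_rhs => rw [← hs.comap_eq hπ]
  exact ⟨fun h j hj => π.injective (h _ hj),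
    fun h j hj => π.symm_apply_eq.1 (h (π.symm j) (by simpa [Setoid.comap_rel] using hj))⟩

end Supporting

theorem actSet_mul {n : ℕ} (π τ : Equiv.Perm (Fin n)) (C : Set (Str n)) :
    actSet (π * τ) C = actSet π (actSet τ C) :=
  (Set.image_image (act π) (act τ) C).symm

theorem actSet_one {n : ℕ} (C : Set (Str n)) : actSet 1 C = C :=
  Set.image_id C

def setStabSubgroup {n : ℕ} (C : Set (Str n)) : Subgroup (Equiv.Perm (Fin n)) where
  carrier := setStab C
  one_mem' := actSet_one C
  mul_mem' {π τ} (hπ : actSet π C = C) (hτ : actSet τ C = C) := by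
    show actSet (π * τ) C = C
    rw [actSet_mul, hτ, hπ]
  inv_mem' {π} (hπ : actSet π C = C) := by
    show actSet π⁻¹ C = C
    conv_lhs => rw [← hπ]
    rw [← actSet_mul, inv_mul_cancel, actSet_one]

theorem mem_setStab_of_act_eq_perm {n : ℕ} {B : Set (Str n)} {π : Equiv.Perm (Fin n)}
    (σ : Equiv.Perm B) (hσ : ∀ b : B, act π (b : Str n) = ((σ b : B) : Str n)) :
    π ∈ setStab B := by
  refine Set.Subset.antisymm ?_ fun b hb => ⟨σ.symm ⟨b, hb⟩, (σ.symm ⟨b, hb⟩).2, by simp [hσ]⟩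
  rintro _ ⟨b, hb, rfl⟩
  rw [hσ ⟨b, hb⟩]
  exact (σ ⟨b, hb⟩).2

theorem stmt_14_general {n : ℕ} (B A : Set (Str n)) (hAB : A ⊆ B)
    (spB : Setoid (Fin n)) (hspB : IsCoarsestSupp (setStab B) spB)
    (S : Set (Fin n)) (hS : S = {k | {k} ∈ spB.classes})
    (p : Str n → Str n)
    (Q : Fin n → Set (Fin n))
    (hQc : ∀ k, Q k ∈ (interSetoid A strSetoid).classes)
    (hQ : ∀ (π : Equiv.Perm (Fin n)) (σ : Equiv.Perm B),
        (∀ b : B, act π (b : Str n) = ((σ b : B) : Str n)) →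
        (∀ a (ha : a ∈ A), ((σ.symm ⟨a, hAB ha⟩ : B) : Str n) = p a) →
        ∀ k, π k ∈ Q k) :
    ∀ (π : Equiv.Perm (Fin n)) (σ : Equiv.Perm B),
      (∀ b : B, act π (b : Str n) = ((σ b : B) : Str n)) →
      (∀ a (ha : a ∈ A), ((σ.symm ⟨a, hAB ha⟩ : B) : Str n) = p a) →
      ∀ P ∈ (interSetoid A strSetoid).classes,
        (π : Fin n → Fin n) ⁻¹' (P ∩ S) = {k | Q k = P} ∩ S := by
  intro π σ hπσ hσp P hP
  have hπB : π ∈ setStabSubgroup B := mem_setStab_of_act_eq_perm σ hπσ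
  have hπQ := hQ π σ hπσ hσp
  ext k
  have hmemP : π k ∈ P ↔ Q k = P :=
    ⟨Setoid.eq_of_mem_classes (hQc k) (hπQ k) hP, fun h => h ▸ hπQ k⟩
  have hmemS : π k ∈ S ↔ k ∈ S := by
    subst hS
    exact hspB.singleton_mem_classes_iff hπB k
  simp only [Set.mem_preimage, Set.mem_inter_iff, Set.mem_ofPred_eq, hmemP, hmemS]

/-- in the setting of the previous lemma, with `S_n` the set of
positions in singleton parts of `SP(B_n)`, every `π ∈ Sym_n` realising some
`σ ∈ Sym(B_n)` with `σ⁻¹(a) = p(a)` for all `a ∈ A` additionally satisfies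
`π⁻¹(P ∩ S_n) = Q_p⁻¹(P) ∩ S_n` for every part `P ∈ ⊓A`. -/
theorem stmt_14 {n : ℕ} (B A : Set (Str n)) (hAB : A ⊆ B)
    (spB : Setoid (Fin n)) (hspB : IsCoarsestSupp (setStab B) spB)
    (S : Set (Fin n)) (hS : S = {k | {k} ∈ spB.classes})
    (p : Str n → Str n) (hmaps : Set.MapsTo p A B) (hinj : Set.InjOn p A)
    (Q : Fin n → Set (Fin n))
    (hQc : ∀ k, Q k ∈ (interSetoid A strSetoid).classes)
    (hQcard : ∀ P ∈ (interSetoid A strSetoid).classes, ({k | Q k = P}).ncard = P.ncard)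
    (hQ : ∀ (π : Equiv.Perm (Fin n)) (σ : Equiv.Perm B),
        (∀ b : B, act π (b : Str n) = ((σ b : B) : Str n)) →
        (∀ a (ha : a ∈ A), ((σ.symm ⟨a, hAB ha⟩ : B) : Str n) = p a) →
        ∀ k, π k ∈ Q k) :
    ∀ (π : Equiv.Perm (Fin n)) (σ : Equiv.Perm B),
      (∀ b : B, act π (b : Str n) = ((σ b : B) : Str n)) →
      (∀ a (ha : a ∈ A), ((σ.symm ⟨a, hAB ha⟩ : B) : Str n) = p a) →
      ∀ P ∈ (interSetoid A strSetoid).classes,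
        (π : Fin n → Fin n) ⁻¹' (P ∩ S) = {k | Q k = P} ∩ S :=
  stmt_14_general B A hAB spB hspB S hS p Q hQc hQ
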